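/- arXiv:2309.09925 — 5 statements merged into one kernel-verified Lean document; each statement's English description precedes it below -/
import Mathlib

section
/- Let H̄_m be a real (m+1)×m matrix whose last row equals h · e_m^T for some h ∈ ℝ (i.e., all entries of the last row vanish except possibly the last, equal to h), and let H_m be the m×m matrix of its first m rows. Assume H_m is invertible. Then for λ ∈ ℝ and g ∈ ℝ^m: H̄_m^T H̄_m g = λ H_m^T g if and only if (H_m + h² · H_m^{−T} e_m e_m^T) g = λ g. -/
/-!
Splitting off the last row of `H̄_m` gives `H̄_mᵀ H̄_m = H_mᵀ H_m + h² e_m e_mᵀ`, and since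
`H_mᵀ (H_m⁻ᵀ e_m) = e_m`, this equals `H_mᵀ (H_m + h² H_m⁻ᵀ e_m e_mᵀ)`. Cancelling the invertible
factor `H_mᵀ` on both sides of the generalized eigenvalue equation gives the standard one.
-/

open Matrix

namespace Matrix

theorem transpose_mul_self_eq_castSucc_add_vecMulVec_last {n R : Type*} [Fintype n]
    [CommSemiring R] {k : ℕ} (B : Matrix (Fin (k + 1)) n R) :
    Bᵀ * B = (B.submatrix Fin.castSucc id)ᵀ * B.submatrix Fin.castSucc id
      + vecMulVec (B (Fin.last k)) (B (Fin.last k)) := by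
  ext i j
  simp [mul_apply, Fin.sum_univ_castSucc, vecMulVec_apply]

variable {n R : Type*} [Fintype n] [DecidableEq n] [CommRing R]

theorem mulVec_mul_eq_smul_mulVec_iff {M : Matrix n n R} (hM : IsUnit M.det)
    (N : Matrix n n R) (c : R) (g : n → R) :
    (M * N) *ᵥ g = c • M *ᵥ g ↔ N *ᵥ g = c • g := by
  rw [← mulVec_mulVec, ← mulVec_smul]
  exact (mulVec_injective_of_isUnit ((isUnit_iff_isUnit_det M).2 hM)).eq_iff

theorem transpose_mul_add_smul_vecMulVec_inv {A : Matrix n n R} (hA : IsUnit A.det)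
    (c : R) (u : n → R) :
    Aᵀ * (A + c • vecMulVec ((Aᵀ)⁻¹ *ᵥ u) u) = Aᵀ * A + c • vecMulVec u u := by
  rw [mul_add, Matrix.mul_smul, mul_vecMulVec, mulVec_mulVec,
    mul_nonsing_inv _ (by rwa [det_transpose]), one_mulVec]

end Matrix

/-- Morgan's reformulation of the harmonic Ritz generalized eigenvalue problem as a
standard eigenvalue problem: `H̄_mᵀ H̄_m g = λ H_mᵀ g` iff
`(H_m + h² H_m⁻ᵀ e_m e_mᵀ) g = λ g`, exploiting the Hessenberg structure (the last row of
`H̄_m` vanishes except for the entry `h = h_{m+1,m}`).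
Here the paper's `m` is `m + 1`. -/
theorem stmt6 {m : ℕ}
    (Hbar : Matrix (Fin (m + 2)) (Fin (m + 1)) ℝ)
    (Hm : Matrix (Fin (m + 1)) (Fin (m + 1)) ℝ) (hHm : Hm = Hbar.submatrix Fin.castSucc id)
    (hinv : IsUnit Hm.det)
    (h : ℝ)
    (hrow : ∀ j, Hbar (Fin.last (m + 1)) j = if j = Fin.last m then h else 0)
    (lam : ℝ) (g : Fin (m + 1) → ℝ) :
    (Hbarᵀ * Hbar).mulVec g = lam • Hmᵀ.mulVec g ↔
      (Hm + h ^ 2 • Matrix.vecMulVec ((Hmᵀ)⁻¹.mulVec (Pi.single (Fin.last m) 1))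
          (Pi.single (Fin.last m) 1)).mulVec g = lam • g := by
  set e : Fin (m + 1) → ℝ := Pi.single (Fin.last m) 1 with he
  have hlast : Hbar (Fin.last (m + 1)) = h • e := by
    ext j
    rw [hrow, he, Pi.smul_apply, Pi.single_apply, smul_eq_mul, mul_ite, mul_one, mul_zero]
  have hgram : Hbarᵀ * Hbar = Hmᵀ * Hm + h ^ 2 • vecMulVec e e := by
    rw [transpose_mul_self_eq_castSucc_add_vecMulVec_last, ← hHm, hlast, smul_vecMulVec,
      vecMulVec_smul, smul_smul, sq]
  rw [hgram, ← transpose_mul_add_smul_vecMulVec_inv hinv,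
    mulVec_mul_eq_smul_mulVec_iff (by rwa [det_transpose])]
end

section
/- Let H̄ be a real (m+1)×m matrix whose first m rows form an invertible matrix H and whose last row equals δ · e_m^T for some δ ∈ ℝ. Let f = H^{−T} e_m, and let c ∈ ℝ^{m+1} be partitioned as c = (v, ω) with v ∈ ℝ^m the first m components and ω ∈ ℝ the last component. Let y ∈ ℝ^m satisfy the normal equations H̄^T (c − H̄ y) = 0. Then the least-squares residual satisfies the colinearity identity c − H̄ y = ((ω − δ f^T v) / (1 + δ² f^T f)) · w, where w ∈ ℝ^{m+1} is the vector whose first m components are −δ f and whose last component is 1. -/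
/-!
Write the residual `r = c - H̄ y` as `(r', t)`. As the last row of `H̄` is `δ e_mᵀ`, the normal
equations say `Hᵀ r' = -δ t e_m`, so `r' = -δ t f`. The last entry of `r` is `t = ω - δ y_m`, and
`y_m = fᵀ H y = fᵀ (v - r') = fᵀ v + δ t fᵀ f`; solving this scalar equation for `t` gives the
coefficient, and then `r = (-δ t f, t) = t w`.
-/

open Matrix

section

variable {R : Type*} [CommRing R]

lemma transpose_mulVec_eq_init_add_last {n : ℕ} {ι : Type*} [Fintype ι]
    (A : Matrix (Fin (n + 1)) ι R) (r : Fin (n + 1) → R) :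
    Aᵀ *ᵥ r = (A.submatrix Fin.castSucc id)ᵀ *ᵥ Fin.init r + r (Fin.last n) • A (Fin.last n) := by
  ext j
  simp [mulVec, dotProduct, Fin.sum_univ_castSucc, Fin.init, mul_comm]

lemma transpose_mulVec_init_eq_of_transpose_mulVec_eq_zero {n : ℕ} {ι : Type*} [Fintype ι]
    [DecidableEq ι] {A : Matrix (Fin (n + 1)) ι R} {δ : R} {k : ι}
    (hlast : A (Fin.last n) = δ • Pi.single k 1) {r : Fin (n + 1) → R} (hr : Aᵀ *ᵥ r = 0) :
    (A.submatrix Fin.castSucc id)ᵀ *ᵥ Fin.init r = -(δ * r (Fin.last n)) • Pi.single k 1 := by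
  have h := transpose_mulVec_eq_init_add_last A r
  rw [hr, hlast, smul_smul, mul_comm] at h
  rw [neg_smul]
  exact eq_neg_of_add_eq_zero_left h.symm

lemma eq_inv_mulVec_of_mulVec_eq {n : Type*} [Fintype n] [DecidableEq n] {A : Matrix n n R}
    (hA : IsUnit A.det) {x b : n → R} (h : A *ᵥ x = b) : x = A⁻¹ *ᵥ b := by
  rw [← h, mulVec_mulVec, nonsing_inv_mul _ hA, one_mulVec]

lemma inv_transpose_mulVec_dotProduct_mulVec {n : Type*} [Fintype n] [DecidableEq n]
    {A : Matrix n n R} (hA : IsUnit A.det) (u y : n → R) :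
    (Aᵀ)⁻¹ *ᵥ u ⬝ᵥ A *ᵥ y = u ⬝ᵥ y := by
  rw [dotProduct_mulVec, ← mulVec_transpose, mulVec_mulVec,
    mul_nonsing_inv _ (isUnit_det_transpose A hA), one_mulVec]

lemma eq_smul_snoc_of_init_eq {n : ℕ} {r : Fin (n + 1) → R} {x : Fin n → R}
    (h : Fin.init r = r (Fin.last n) • x) : r = r (Fin.last n) • Fin.snoc x 1 := by
  conv_lhs => rw [← Fin.snoc_init_self r, h]
  ext i
  refine Fin.lastCases ?_ (fun i => ?_) i <;> simp

end

lemma eq_div_of_eq_sub_mul_of_eq_add {K : Type*} [Field K] {t ω δ z a b : K}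
    (hd : 1 + δ ^ 2 * b ≠ 0) (ht : t = ω - δ * z) (hz : z = a + δ * t * b) :
    t = (ω - δ * a) / (1 + δ ^ 2 * b) := by
  rw [eq_div_iff hd]
  linear_combination ht - δ * hz

-- The paper's `m` is `m + 1` here.
/-- The Rollin–Fichtner colinearity identity for the GMRES least-squares residual:
if `y` solves the normal equations `H̄ᵀ (c - H̄ y) = 0`, then
`c - H̄ y = ((ω - δ fᵀ v) / (1 + δ² fᵀ f)) • w` with `w = (-δ f, 1)`.
Here the paper's `m` is `m + 1`. -/
theorem stmt7 {m : ℕ}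
    (Hbar : Matrix (Fin (m + 2)) (Fin (m + 1)) ℝ)
    (H : Matrix (Fin (m + 1)) (Fin (m + 1)) ℝ) (hH : H = Hbar.submatrix Fin.castSucc id)
    (hinv : IsUnit H.det)
    (δ : ℝ)
    (hrow : ∀ j, Hbar (Fin.last (m + 1)) j = if j = Fin.last m then δ else 0)
    (f : Fin (m + 1) → ℝ) (hf : f = (Hᵀ)⁻¹.mulVec (Pi.single (Fin.last m) 1))
    (c : Fin (m + 2) → ℝ)
    (v : Fin (m + 1) → ℝ) (hv : v = fun j => c (Fin.castSucc j))
    (ω : ℝ) (hω : ω = c (Fin.last (m + 1)))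
    (y : Fin (m + 1) → ℝ)
    (hy : Hbarᵀ.mulVec (c - Hbar.mulVec y) = 0)
    (w : Fin (m + 2) → ℝ) (hw : w = Fin.snoc (-δ • f) 1) :
    c - Hbar.mulVec y = ((ω - δ * (f ⬝ᵥ v)) / (1 + δ ^ 2 * (f ⬝ᵥ f))) • w := by
  set r := c - Hbar *ᵥ y
  set t := r (Fin.last (m + 1))
  have hlast_row : Hbar (Fin.last (m + 1)) = δ • Pi.single (Fin.last m) 1 := by
    ext j
    simp [hrow, Pi.single_apply]
  have hHy : H *ᵥ y = v - Fin.init r := by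
    subst hH hv
    ext i
    simp only [Pi.sub_apply, Fin.init, r, sub_sub_cancel]
    rfl
  have hinit : Fin.init r = -(δ * t) • f := by
    have hnormal := transpose_mulVec_init_eq_of_transpose_mulVec_eq_zero hlast_row hy
    rw [← hH] at hnormal
    rw [hf, eq_inv_mulVec_of_mulVec_eq (isUnit_det_transpose H hinv) hnormal, mulVec_smul]
  have ht : t = ω - δ * y (Fin.last m) := by
    have hrow_y : (Hbar *ᵥ y) (Fin.last (m + 1)) = δ * y (Fin.last m) := by
      rw [mulVec, hlast_row, smul_dotProduct, single_one_dotProduct, smul_eq_mul]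
    rw [hω, ← hrow_y]
    rfl
  have hy_last : y (Fin.last m) = f ⬝ᵥ v + δ * t * (f ⬝ᵥ f) := by
    rw [← single_one_dotProduct (Fin.last m) y, hf, ← inv_transpose_mulVec_dotProduct_mulVec hinv,
      ← hf, hHy, hinit, dotProduct_sub, dotProduct_smul, smul_eq_mul]
    ring
  have hden : 1 + δ ^ 2 * (f ⬝ᵥ f) ≠ 0 := by
    have : 0 ≤ f ⬝ᵥ f := by simpa using dotProduct_star_self_nonneg f
    positivity
  rw [hw, ← eq_div_of_eq_sub_mul_of_eq_add hden ht hy_last]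
  refine eq_smul_snoc_of_init_eq ?_
  rw [hinit, smul_smul]
  congr 1
  ring
end

section
/- Let A be a real n×n matrix, b, x0 ∈ ℝ^n, r0 = b − A x0. Let U_k, C_k be real n×k matrices with A U_k = C_k and C_k^T C_k = I_k; let V_{m+1} be a real n×(m+1) matrix with orthonormal columns satisfying C_k^T V_{m+1} = 0, with first m columns V_m, and suppose (I − C_k C_k^T) A V_m = V_{m+1} H̄_m for a real (m+1)×m matrix H̄_m. Set x_k = x0 + U_k C_k^T r0, r_k = (I − C_k C_k^T) r0, and let y* ∈ ℝ^m minimize ‖r_k − V_{m+1} H̄_m y‖₂ over y ∈ ℝ^m. Then x_{k+1} = x_k + (I − U_k C_k^T A) V_m y* satisfies ‖b − A x_{k+1}‖₂ ≤ ‖b − A x‖₂ for every x of the form x = x0 + U_k w + V_m y with w ∈ ℝ^k and y ∈ ℝ^m. -/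
/-
The correction `(I - U Cᵀ A) V_m y` is built so that `A (I - U Cᵀ A) = (I - C Cᵀ) A`, whence the
residual of `x_{k+1}` is `r_k - V H̄ y*`. Any other candidate `x0 + U w + V_m y` has residual
`(r_k - V H̄ y) + C z` for some `z`, and `r_k - V H̄ y` is orthogonal to `range C` because
`Cᵀ (I - C Cᵀ) = 0` and `Cᵀ V = 0`. By Pythagoras its norm is at least `‖r_k - V H̄ y‖`, which is
at least `‖r_k - V H̄ y*‖` by the choice of `y*`.
-/

open Matrix

/-- Euclidean norm of a vector in `ℝ^n`. -/
noncomputable def norm2 {n : ℕ} (v : Fin n → ℝ) : ℝ := Real.sqrt (∑ i, v i ^ 2)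

section Residuals

variable {R ι κ μ : Type*} [Ring R] [Fintype ι] [DecidableEq ι] [Fintype κ] [Fintype μ]
  {A : Matrix ι ι R} {U C : Matrix ι κ R}

theorem mul_one_sub_mul_mul_eq (hAU : A * U = C) (D : Matrix κ ι R) :
    A * (1 - U * D * A) = (1 - C * D) * A := by
  rw [Matrix.mul_sub, Matrix.sub_mul, Matrix.mul_one, Matrix.one_mul, Matrix.mul_assoc U,
    ← Matrix.mul_assoc A, hAU, Matrix.mul_assoc]

theorem sub_mulVec_update_eq_projected_residual (hAU : A * U = C) (D : Matrix κ ι R)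
    (W : Matrix ι μ R) (b x₀ : ι → R) (y : μ → R) :
    b - A *ᵥ (x₀ + U *ᵥ (D *ᵥ (b - A *ᵥ x₀)) + ((1 - U * D * A) * W) *ᵥ y)
      = (1 - C * D) *ᵥ (b - A *ᵥ x₀) - ((1 - C * D) * A * W) *ᵥ y := by
  rw [← mul_one_sub_mul_mul_eq hAU]
  simp only [mulVec_add, mulVec_mulVec, sub_mulVec, one_mulVec, ← Matrix.mul_assoc, hAU]
  abel

theorem sub_mulVec_add_add_eq_projected_residual_add_mulVec (hAU : A * U = C)
    (D : Matrix κ ι R) (W : Matrix ι μ R) (b x₀ : ι → R) (w : κ → R) (y : μ → R) :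
    b - A *ᵥ (x₀ + U *ᵥ w + W *ᵥ y)
      = ((1 - C * D) *ᵥ (b - A *ᵥ x₀) - ((1 - C * D) * A * W) *ᵥ y)
        + C *ᵥ (D *ᵥ (b - A *ᵥ x₀) - w - (D * A * W) *ᵥ y) := by
  simp only [mulVec_add, mulVec_sub, mulVec_mulVec, sub_mulVec, one_mulVec, Matrix.sub_mul,
    Matrix.one_mul, Matrix.mul_assoc, hAU]
  abel

end Residuals

theorem transpose_mul_one_sub_mul_transpose {R ι κ : Type*} [CommRing R] [Fintype ι]
    [DecidableEq ι] [Fintype κ] [DecidableEq κ] {C : Matrix ι κ R} (hC : Cᵀ * C = 1) :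
    Cᵀ * (1 - C * Cᵀ) = 0 := by
  rw [Matrix.mul_sub, Matrix.mul_one, ← Matrix.mul_assoc, hC, Matrix.one_mul, sub_self]

theorem norm2_eq_sqrt_dotProduct {n : ℕ} (v : Fin n → ℝ) : norm2 v = √(v ⬝ᵥ v) := by
  simp [norm2, dotProduct, sq]

theorem norm2_le_norm2_add_of_dotProduct_eq_zero {n : ℕ} {u v : Fin n → ℝ} (h : u ⬝ᵥ v = 0) :
    norm2 u ≤ norm2 (u + v) := by
  rw [norm2_eq_sqrt_dotProduct, norm2_eq_sqrt_dotProduct]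
  refine Real.sqrt_le_sqrt ?_
  have hexpand : (u + v) ⬝ᵥ (u + v) = u ⬝ᵥ u + v ⬝ᵥ v := by
    rw [add_dotProduct, dotProduct_add, dotProduct_add, h, dotProduct_comm v u, h]
    ring
  have hv : 0 ≤ v ⬝ᵥ v := Finset.sum_nonneg fun i _ => mul_self_nonneg (v i)
  linarith

theorem norm2_le_norm2_add_mulVec_of_transpose_mulVec_eq_zero {n k : ℕ}
    {C : Matrix (Fin n) (Fin k) ℝ} {r : Fin n → ℝ} (h : Cᵀ *ᵥ r = 0) (z : Fin k → ℝ) :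
    norm2 r ≤ norm2 (r + C *ᵥ z) := by
  refine norm2_le_norm2_add_of_dotProduct_eq_zero ?_
  rw [dotProduct_mulVec, ← mulVec_transpose, h, zero_dotProduct]

theorem stmt10_general {n k m : ℕ} (A : Matrix (Fin n) (Fin n) ℝ)
    (b x0 : Fin n → ℝ) (r0 : Fin n → ℝ) (hr0 : r0 = b - A.mulVec x0)
    (U C : Matrix (Fin n) (Fin k) ℝ) (hAU : A * U = C) (hC : Cᵀ * C = 1)
    (V : Matrix (Fin n) (Fin (m + 1)) ℝ) (hCV : Cᵀ * V = 0)
    (Vm : Matrix (Fin n) (Fin m) ℝ)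
    (Hbar : Matrix (Fin (m + 1)) (Fin m) ℝ)
    (hArn : (1 - C * Cᵀ) * A * Vm = V * Hbar)
    (xk : Fin n → ℝ) (hxk : xk = x0 + U.mulVec (Cᵀ.mulVec r0))
    (rk : Fin n → ℝ) (hrk : rk = (1 - C * Cᵀ).mulVec r0)
    (ystar : Fin m → ℝ)
    (hystar : ∀ y : Fin m → ℝ,
      norm2 (rk - V.mulVec (Hbar.mulVec ystar)) ≤ norm2 (rk - V.mulVec (Hbar.mulVec y)))
    (xk1 : Fin n → ℝ) (hxk1 : xk1 = xk + ((1 - U * Cᵀ * A) * Vm).mulVec ystar) :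
    ∀ (w : Fin k → ℝ) (y : Fin m → ℝ),
      norm2 (b - A.mulVec xk1) ≤ norm2 (b - A.mulVec (x0 + U.mulVec w + Vm.mulVec y)) := by
  intro w y
  subst hr0 hxk hrk hxk1
  have horth : Cᵀ *ᵥ ((1 - C * Cᵀ) *ᵥ (b - A *ᵥ x0) - V *ᵥ (Hbar *ᵥ y)) = 0 := by
    rw [mulVec_sub, mulVec_mulVec, mulVec_mulVec, transpose_mul_one_sub_mul_transpose hC,
      hCV, zero_mulVec, zero_mulVec, sub_zero]
  rw [sub_mulVec_update_eq_projected_residual hAU,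
    sub_mulVec_add_add_eq_projected_residual_add_mulVec hAU Cᵀ, hArn, ← mulVec_mulVec,
    ← mulVec_mulVec]
  exact (hystar y).trans (norm2_le_norm2_add_mulVec_of_transpose_mulVec_eq_zero horth _)

/-- Global residual minimization property of the GCRO iterate: the GCRO iterate `x_{k+1}`
minimizes the residual norm over `x0 + range U_k ⊕ range V_m`. -/
theorem stmt10 {n k m : ℕ} (A : Matrix (Fin n) (Fin n) ℝ)
    (b x0 : Fin n → ℝ) (r0 : Fin n → ℝ) (hr0 : r0 = b - A.mulVec x0)
    (U C : Matrix (Fin n) (Fin k) ℝ) (hAU : A * U = C) (hC : Cᵀ * C = 1)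
    (V : Matrix (Fin n) (Fin (m + 1)) ℝ) (hV : Vᵀ * V = 1) (hCV : Cᵀ * V = 0)
    (Vm : Matrix (Fin n) (Fin m) ℝ) (hVm : Vm = V.submatrix id Fin.castSucc)
    (Hbar : Matrix (Fin (m + 1)) (Fin m) ℝ)
    (hArn : (1 - C * Cᵀ) * A * Vm = V * Hbar)
    (xk : Fin n → ℝ) (hxk : xk = x0 + U.mulVec (Cᵀ.mulVec r0))
    (rk : Fin n → ℝ) (hrk : rk = (1 - C * Cᵀ).mulVec r0)
    (ystar : Fin m → ℝ)
    (hystar : ∀ y : Fin m → ℝ,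
      norm2 (rk - V.mulVec (Hbar.mulVec ystar)) ≤ norm2 (rk - V.mulVec (Hbar.mulVec y)))
    (xk1 : Fin n → ℝ) (hxk1 : xk1 = xk + ((1 - U * Cᵀ * A) * Vm).mulVec ystar) :
    ∀ (w : Fin k → ℝ) (y : Fin m → ℝ),
      norm2 (b - A.mulVec xk1) ≤ norm2 (b - A.mulVec (x0 + U.mulVec w + Vm.mulVec y)) :=
  stmt10_general A b x0 r0 hr0 U C hAU hC V hCV Vm Hbar hArn xk hxk rk hrk ystar hystar xk1 hxk1
end

section
/- Let A be a real n×n matrix, V_{m+1} a real n×(m+1) matrix with first m columns V_m, H̄_m a real (m+1)×m matrix with A V_m = V_{m+1} H̄_m, and r1 ∈ ℝ^n with (A V_m)^T r1 = 0. Let P_k be a real m×k matrix, and suppose H̄_m P_k = Q R where Q is a real (m+1)×k matrix and R is an invertible real k×k matrix. Define C_k = V_{m+1} Q. Then C_k^T r1 = 0. -/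
open Matrix

/-! The Arnoldi relation turns `C R = V H̄ P` into `C R = (A V_m) P`, so
`Rᵀ (Cᵀ r1) = Pᵀ ((A V_m)ᵀ r1) = 0`, and `Rᵀ` is injective. -/

namespace Matrix

variable {ι κ μ R : Type*} [Fintype ι] [Fintype κ] [Fintype μ] [DecidableEq κ] [CommRing R]

theorem vecMul_eq_zero_of_mul_eq_mul_of_isUnit {C : Matrix ι κ R} {T : Matrix κ κ R}
    {B : Matrix ι μ R} {P : Matrix μ κ R} {r : ι → R}
    (hB : r ᵥ* B = 0) (hCT : C * T = B * P) (hT : IsUnit T) : r ᵥ* C = 0 := by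
  refine vecMul_injective_of_isUnit hT (?_ : r ᵥ* C ᵥ* T = 0 ᵥ* T)
  rw [vecMul_vecMul, hCT, ← vecMul_vecMul, hB, zero_vecMul, zero_vecMul]

end Matrix

theorem stmt12_general {n m k : ℕ} (A : Matrix (Fin n) (Fin n) ℝ)
    (V : Matrix (Fin n) (Fin (m + 1)) ℝ)
    (Vm : Matrix (Fin n) (Fin m) ℝ)
    (Hbar : Matrix (Fin (m + 1)) (Fin m) ℝ) (hArn : A * Vm = V * Hbar)
    (r1 : Fin n → ℝ) (hr1 : (A * Vm)ᵀ.mulVec r1 = 0)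
    (P : Matrix (Fin m) (Fin k) ℝ)
    (Q : Matrix (Fin (m + 1)) (Fin k) ℝ) (R : Matrix (Fin k) (Fin k) ℝ)
    (hQR : Hbar * P = Q * R) (hR : IsUnit R.det)
    (C : Matrix (Fin n) (Fin k) ℝ) (hC : C = V * Q) :
    Cᵀ.mulVec r1 = 0 := by
  have hCR : C * R = (A * Vm) * P := by
    rw [hC, hArn, Matrix.mul_assoc, Matrix.mul_assoc, hQR]
  rw [mulVec_transpose] at hr1 ⊢
  exact vecMul_eq_zero_of_mul_eq_mul_of_isUnit hr1 hCR ((isUnit_iff_isUnit_det R).2 hR)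

/-- The end-of-cycle residual stays orthogonal to the recycled subspace built in GCRO-DR:
with `(A V_m)ᵀ r1 = 0`, the reduced QR factorization `H̄_m P_k = Q R` (`R` nonsingular)
and `C_k = V_{m+1} Q`, we get `C_kᵀ r1 = 0`. -/
theorem stmt12 {n m k : ℕ} (A : Matrix (Fin n) (Fin n) ℝ)
    (V : Matrix (Fin n) (Fin (m + 1)) ℝ)
    (Vm : Matrix (Fin n) (Fin m) ℝ) (hVm : Vm = V.submatrix id Fin.castSucc)
    (Hbar : Matrix (Fin (m + 1)) (Fin m) ℝ) (hArn : A * Vm = V * Hbar)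
    (r1 : Fin n → ℝ) (hr1 : (A * Vm)ᵀ.mulVec r1 = 0)
    (P : Matrix (Fin m) (Fin k) ℝ)
    (Q : Matrix (Fin (m + 1)) (Fin k) ℝ) (R : Matrix (Fin k) (Fin k) ℝ)
    (hQR : Hbar * P = Q * R) (hR : IsUnit R.det)
    (C : Matrix (Fin n) (Fin k) ℝ) (hC : C = V * Q) :
    Cᵀ.mulVec r1 = 0 :=
  stmt12_general A V Vm Hbar hArn r1 hr1 P Q R hQR hR C hC
end

section
/- Let H̄_m be a real (m+1)×m matrix whose first m rows form an invertible matrix H_m and whose last row equals h · e_m^T for some h ∈ ℝ, and let M be a real (m+1)×m matrix whose last row is zero, with M' denoting the m×m matrix of its first m rows. Set f = H_m^{−T} e_m. Then for θ ∈ ℝ and g ∈ ℝ^m: H̄_m^T H̄_m g = θ H̄_m^T M g if and only if (H_m + h² f e_m^T) g = θ M' g. -/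
/-!
Splitting off the last row `r` of a matrix `A` gives `Aᵀ B = A'ᵀ B' + r sᵀ`, where `A'`, `B'` are
the leading rows and `s` is the last row of `B`. Since the last row of `M` vanishes,
`H̄ᵀ M = Hᵀ M'`; since the last row of `H̄` is `h eᵀ` and `e = Hᵀ f`, also
`H̄ᵀ H̄ = Hᵀ H + h² e eᵀ = Hᵀ (H + h² f eᵀ)`. Both sides of the generalized eigenproblem therefore
carry the common invertible left factor `Hᵀ`, which cancels.
-/

open Matrix

namespace Matrix

theorem transpose_mul_eq_submatrix_castSucc_add_vecMulVec_last {k : ℕ} {n R : Type*}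
    [Fintype n] [CommSemiring R] (A B : Matrix (Fin (k + 1)) n R) :
    Aᵀ * B = (A.submatrix Fin.castSucc id)ᵀ * B.submatrix Fin.castSucc id
      + vecMulVec (A (Fin.last k)) (B (Fin.last k)) := by
  ext i j
  simp [mul_apply, Fin.sum_univ_castSucc, vecMulVec_apply]

theorem mul_mulVec_eq_smul_mul_mulVec_iff {n K : Type*} [Fintype n] [DecidableEq n] [Field K]
    {A : Matrix n n K} (hA : IsUnit A) (B C : Matrix n n K) (θ : K) (g : n → K) :
    (A * B) *ᵥ g = θ • (A * C) *ᵥ g ↔ B *ᵥ g = θ • C *ᵥ g := by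
  rw [← mulVec_mulVec, ← mulVec_mulVec, ← mulVec_smul]
  exact (mulVec_injective_iff_isUnit.2 hA).eq_iff

end Matrix

/-- Reformulation of the generalized harmonic Ritz eigenvalue problem of GCRO-DR:
with the last row of `H̄_m` equal to `h e_mᵀ`, `H_m` invertible, the last row of `M`
zero and `f = H_m⁻ᵀ e_m`, we have `H̄_mᵀ H̄_m g = θ H̄_mᵀ M g` iff
`(H_m + h² f e_mᵀ) g = θ M' g`. Here the paper's `m` is `m + 1`. -/
theorem stmt15 {m : ℕ}
    (Hbar : Matrix (Fin (m + 2)) (Fin (m + 1)) ℝ)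
    (Hm : Matrix (Fin (m + 1)) (Fin (m + 1)) ℝ) (hHm : Hm = Hbar.submatrix Fin.castSucc id)
    (hinv : IsUnit Hm.det)
    (h : ℝ)
    (hrow : ∀ j, Hbar (Fin.last (m + 1)) j = if j = Fin.last m then h else 0)
    (M : Matrix (Fin (m + 2)) (Fin (m + 1)) ℝ)
    (hM : ∀ j, M (Fin.last (m + 1)) j = 0)
    (M' : Matrix (Fin (m + 1)) (Fin (m + 1)) ℝ) (hM' : M' = M.submatrix Fin.castSucc id)
    (f : Fin (m + 1) → ℝ) (hf : f = (Hmᵀ)⁻¹.mulVec (Pi.single (Fin.last m) 1))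
    (θ : ℝ) (g : Fin (m + 1) → ℝ) :
    (Hbarᵀ * Hbar).mulVec g = θ • (Hbarᵀ * M).mulVec g ↔
      (Hm + h ^ 2 • Matrix.vecMulVec f (Pi.single (Fin.last m) 1)).mulVec g
        = θ • M'.mulVec g := by
  set e : Fin (m + 1) → ℝ := Pi.single (Fin.last m) 1
  have hTinv : IsUnit Hmᵀ.det := by rwa [det_transpose]
  have hlast : Hbar (Fin.last (m + 1)) = h • e := by
    ext j
    simp [e, hrow, Pi.single_apply]
  have hHf : Hmᵀ *ᵥ f = e := by
    rw [hf, mulVec_mulVec, mul_nonsing_inv _ hTinv, one_mulVec]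
  have hgram : Hbarᵀ * Hbar = Hmᵀ * (Hm + h ^ 2 • vecMulVec f e) := by
    rw [transpose_mul_eq_submatrix_castSucc_add_vecMulVec_last, ← hHm, hlast, mul_add,
      Matrix.mul_smul, mul_vecMulVec, hHf, smul_vecMulVec, vecMulVec_smul, smul_smul, sq]
  have hcross : Hbarᵀ * M = Hmᵀ * M' := by
    rw [transpose_mul_eq_submatrix_castSucc_add_vecMulVec_last, ← hHm, ← hM',
      show M (Fin.last (m + 1)) = 0 from funext hM, vecMulVec_zero, add_zero]
  rw [hgram, hcross]
  exact mul_mulVec_eq_smul_mul_mulVec_iff ((isUnit_iff_isUnit_det _).2 hTinv) _ _ θ g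
end
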